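/- Let 1 ≤ u ≤ v and 1 ≤ k ≤ n, and suppose C(n-1, k) ≥ u - 1. Let F consist of all k-element subsets of [n] containing the element 1 together with any u - 1 pairwise distinct k-element subsets of [n] not containing the element 1. Then F is (u,v)-union-intersecting and |F| = C(n-1, k-1) + u - 1. -/

import Mathlib

/-- A family `F` is `(u,v)`-union-intersecting if for any `u + v` pairwise distinct
members `F₁, …, F_u, G₁, …, G_v ∈ F` one has
`(F₁ ∪ ⋯ ∪ F_u) ∩ (G₁ ∪ ⋯ ∪ G_v) ≠ ∅`. -/
def UnionIntersecting (u v : ℕ) (F : Finset (Finset ℕ)) : Prop :=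
  ∀ S T : Finset (Finset ℕ), S ⊆ F → T ⊆ F → Disjoint S T →
    S.card = u → T.card = v → (S.sup id ∩ T.sup id).Nonempty

/-!
All members of `F` outside `G` contain `1`, and `G` has fewer than `u ≤ v` members, so each of
the two subfamilies contains a member outside `G`; hence `1` lies in both unions. The
cardinality is that of the disjoint union of `G` with the star of `1` in `([n] choose k)`.
-/

open Finset

theorem card_powerset_filter_card_eq_and_mem {α : Type*} [DecidableEq α] {s : Finset α} {a : α}
    (ha : a ∈ s) {k : ℕ} (hk : 1 ≤ k) :
    #(s.powerset.filter fun A => #A = k ∧ a ∈ A) = (#s - 1).choose (k - 1) := by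
  have hstar : (s.powerset.filter fun A => #A = k ∧ a ∈ A) =
      (s.powersetCard k).filter ({a} ⊆ ·) := by
    rw [powersetCard_eq_filter, filter_filter]
    simp only [singleton_subset_iff]
  rw [hstar, card_filter_powersetCard_subset _ _ _ (singleton_subset_iff.2 ha)
    (by rwa [card_singleton]), card_singleton]

theorem unionIntersecting_of_mem_of_notMem {u v x : ℕ} {F G : Finset (Finset ℕ)}
    (huv : u ≤ v) (hG : #G < u) (hF : ∀ A ∈ F, A ∉ G → x ∈ A) :
    UnionIntersecting u v F := by
  have mem_sup : ∀ S ⊆ F, u ≤ #S → x ∈ S.sup id := fun S hS hSu ↦ by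
    obtain ⟨A, hAS, hAG⟩ := exists_mem_notMem_of_card_lt_card (hG.trans_le hSu)
    exact mem_sup.2 ⟨A, hAS, hF A (hS hAS) hAG⟩
  intro S T hS hT _ hSu hTv
  exact ⟨x, mem_inter.2 ⟨mem_sup S hS hSu.ge, mem_sup T hT (hTv ▸ huv)⟩⟩

theorem uv_union_intersecting_construction_general (u v k n : ℕ) (hu : 1 ≤ u)
    (huv : u ≤ v) (hk : 1 ≤ k) (hkn : k ≤ n)
    (G : Finset (Finset ℕ)) (hGcard : G.card = u - 1)
    (hG : ∀ A ∈ G, A ⊆ Finset.Icc 1 n ∧ A.card = k ∧ 1 ∉ A)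
    (F : Finset (Finset ℕ))
    (hF : F = (Finset.Icc 1 n).powerset.filter (fun A => A.card = k ∧ 1 ∈ A) ∪ G) :
    UnionIntersecting u v F ∧ F.card = (n - 1).choose (k - 1) + u - 1 := by
  subst hF
  set star := (Icc 1 n).powerset.filter fun A => #A = k ∧ 1 ∈ A
  have hstar : ∀ A ∈ star ∪ G, A ∉ G → 1 ∈ A := fun A hA hAG ↦
    (mem_filter.1 ((mem_union.1 hA).resolve_right hAG)).2.2
  have hdisj : Disjoint star G :=
    disjoint_left.2 fun A hA hAG ↦ (hG A hAG).2.2 (mem_filter.1 hA).2.2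
  have hcard : #star = (n - 1).choose (k - 1) := by
    rw [card_powerset_filter_card_eq_and_mem (mem_Icc.2 ⟨le_rfl, hk.trans hkn⟩) hk,
      Nat.card_Icc, Nat.add_sub_cancel]
  refine ⟨unionIntersecting_of_mem_of_notMem huv (by omega) hstar, ?_⟩
  rw [card_union_of_disjoint hdisj, hcard, hGcard]
  omega

/-- Let `1 ≤ u ≤ v`, `1 ≤ k ≤ n`, and suppose `C(n-1, k) ≥ u - 1`.
Let `F` consist of all `k`-element subsets of `[n]` containing the element `1`
together with any `u - 1` pairwise distinct `k`-element subsets of `[n]` not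
containing `1`. Then `F` is `(u,v)`-union-intersecting and
`|F| = C(n-1, k-1) + u - 1`. -/
theorem uv_union_intersecting_construction (u v k n : ℕ) (hu : 1 ≤ u)
    (huv : u ≤ v) (hk : 1 ≤ k) (hkn : k ≤ n)
    (hchoose : u - 1 ≤ (n - 1).choose k)
    (G : Finset (Finset ℕ)) (hGcard : G.card = u - 1)
    (hG : ∀ A ∈ G, A ⊆ Finset.Icc 1 n ∧ A.card = k ∧ 1 ∉ A)
    (F : Finset (Finset ℕ))
    (hF : F = (Finset.Icc 1 n).powerset.filter (fun A => A.card = k ∧ 1 ∈ A) ∪ G) :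
    UnionIntersecting u v F ∧ F.card = (n - 1).choose (k - 1) + u - 1 :=
  uv_union_intersecting_construction_general u v k n hu huv hk hkn G hGcard hG F hF
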